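/- For all n ≥ 1, t(2n) = s(n) − t(n-1), and for all n ≥ 0, t(2n+1) = s(n) − t(n). -/

import Mathlib

def rs : ℕ → ℤ
  | 0 => 1
  | (n+1) =>
    if (n+1) % 2 = 0 then rs ((n+1)/2)
    else (-1)^((n+1)/2) * rs ((n+1)/2)
decreasing_by all_goals exact Nat.div_lt_self (Nat.succ_pos n) (by norm_num)

def s (n : ℕ) : ℤ := ∑ i ∈ Finset.range (n+1), rs i

def t (n : ℕ) : ℤ := ∑ i ∈ Finset.range (n+1), (-1)^i * rs i

/-!
Pairing the terms of `t (2n+1)` as `a(2k) - a(2k+1) = a(k) - (-1)^k a(k)` gives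
`t (2n+1) = s n - t n`; removing the last term `-a(2n+1) = -(-1)^n a(n)` then gives
`t (2n) = s n - t n + (-1)^n a(n) = s n - t (n-1)`.
-/

open Finset

theorem sum_range_two_mul {M : Type*} [AddCommMonoid M] (f : ℕ → M) (n : ℕ) :
    ∑ i ∈ range (2 * n), f i = ∑ i ∈ range n, (f (2 * i) + f (2 * i + 1)) := by
  induction n with
  | zero => simp
  | succ n ih => rw [mul_add, mul_one, sum_range_succ, sum_range_succ, ih, sum_range_succ, add_assoc]

theorem rs_two_mul (k : ℕ) : rs (2 * k) = rs k := by
  cases k with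
  | zero => rfl
  | succ m =>
    rw [show 2 * (m + 1) = (2 * m + 1) + 1 by ring, rs, if_pos (by omega)]
    congr 1
    omega

theorem rs_two_mul_add_one (k : ℕ) : rs (2 * k + 1) = (-1) ^ k * rs k := by
  rw [rs, if_neg (by omega), show (2 * k + 1) / 2 = k by omega]

theorem t_succ (n : ℕ) : t (n + 1) = t n + (-1) ^ (n + 1) * rs (n + 1) :=
  sum_range_succ _ _

theorem t_two_mul_add_one (n : ℕ) : t (2 * n + 1) = s n - t n := by
  have hpair (k : ℕ) :
      (-1) ^ (2 * k) * rs (2 * k) + (-1) ^ (2 * k + 1) * rs (2 * k + 1) = rs k - (-1) ^ k * rs k := by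
    rw [rs_two_mul, rs_two_mul_add_one, pow_succ, pow_mul]
    ring
  rw [t, show 2 * n + 1 + 1 = 2 * (n + 1) by ring, sum_range_two_mul, sum_congr rfl fun k _ => hpair k,
    sum_sub_distrib, s, t]

theorem t_two_mul_succ (n : ℕ) : t (2 * (n + 1)) = s (n + 1) - t n := by
  have h := t_succ (2 * (n + 1))
  rw [t_two_mul_add_one, t_succ, rs_two_mul_add_one, (odd_two_mul_add_one _).neg_one_pow] at h
  linear_combination -h

theorem stmt2 : (∀ n : ℕ, 1 ≤ n → t (2*n) = s n - t (n-1)) ∧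
    (∀ n : ℕ, t (2*n+1) = s n - t n) := by
  refine ⟨fun n hn => ?_, t_two_mul_add_one⟩
  obtain ⟨m, rfl⟩ := Nat.exists_eq_add_of_le' hn
  exact t_two_mul_succ m
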